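/- arXiv:2008.11075 — 3 statements merged into one kernel-verified Lean document; each statement's English description precedes it below -/
import Mathlib

section
/- For t > 0 and z = a - ik ∈ ℂ, the trace of T_z e^{-tH} on L²(ℝ) equals (1/√2)·(cosh t − 1)^{-1/2}·exp(−a²·(cosh t + 1)/(4 sinh t) − k²·sinh t/(4(cosh t − 1))). In particular, if z ≠ 0 then tr(T_z e^{-tH}) = O(t^∞) as t → 0⁺, and if z = 0 then tr(e^{-tH}) = 1/t + O(1) as t → 0⁺. -/
open Complex Asymptotics Filter

/-- Mehler's formula for the heat kernel of the quantum harmonic oscillator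
`H = (1/2)(x² - d²/dx²)`:
`e^{-tH}(x,y) = (2π sinh t)^{-1/2} exp(−coth t·(x²+y²)/2 + xy/sinh t)`. -/
noncomputable def mehlerKernel (t x y : ℝ) : ℂ :=
  (((Real.sqrt (2 * Real.pi * Real.sinh t))⁻¹ : ℝ) : ℂ) *
    Complex.exp (((-(Real.cosh t / Real.sinh t) * ((x ^ 2 + y ^ 2) / 2)
      + x * y / Real.sinh t : ℝ) : ℂ))

/-- The trace of `T_z e^{-tH}` on `L²(ℝ)`, computed as the integral over the diagonal of the
Schwartz kernel of `T_z e^{-tH}`, where for `z = a - ik` the Heisenberg-Weyl operator is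
`T_z u(x) = e^{i(kx - ak/2)} u(x-a)`. -/
noncomputable def heatTraceTz (t : ℝ) (z : ℂ) : ℂ :=
  ∫ x : ℝ, Complex.exp (I * ((((-z.im) : ℝ) : ℂ) * x - z.re * (-z.im) / 2)) *
    mehlerKernel t (x - z.re) x

/-! On the diagonal, the kernel of `T_z e^{-tH}` is a complex Gaussian in `x` with quadratic
coefficient `-tanh (t/2)`, so the trace is a Gaussian integral. In half-angle form it equals
`exp (-|z|²/4 · coth (t/2)) / (2 sinh (t/2))`. For `z ≠ 0` the factor
`exp (-|z|² / (4 sinh (t/2)))` beats every power of `t`; for `z = 0` only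
`1 / (2 sinh (t/2)) = 1/t + O(t)` remains. -/

open scoped Topology

namespace Real

theorem abs_sinh_sub_self_le {x : ℝ} (hx : |x| ≤ 1) : |sinh x - x| ≤ x ^ 2 := by
  have hpos := abs_exp_sub_one_sub_id_le hx
  have hneg := abs_exp_sub_one_sub_id_le (x := -x) (by rwa [abs_neg])
  rw [sinh_eq]
  calc |(exp x - exp (-x)) / 2 - x| = |(exp x - 1 - x) - (exp (-x) - 1 - -x)| / 2 := by
        rw [← abs_two, ← abs_div]; ring_nf
    _ ≤ (x ^ 2 + (-x) ^ 2) / 2 := by gcongr; exact (abs_sub _ _).trans (add_le_add hpos hneg)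
    _ = x ^ 2 := by ring

theorem abs_inv_sinh_sub_inv_le_one {x : ℝ} (hx : 0 < x) (hx1 : x ≤ 1) :
    |(sinh x)⁻¹ - x⁻¹| ≤ 1 := by
  have hsinh : x ≤ sinh x := self_le_sinh_iff.2 hx.le
  have hdiff := abs_sinh_sub_self_le (abs_le.2 ⟨by linarith, hx1⟩)
  have hs : 0 < sinh x := hx.trans_le hsinh
  rw [inv_sub_inv hs.ne' hx.ne', abs_div, abs_sub_comm, abs_of_pos (mul_pos hs hx),
    div_le_one (mul_pos hs hx)]
  nlinarith

theorem exp_neg_div_le_factorial_mul_pow {c s : ℝ} (hc : 0 < c) (hs : 0 < s) (n : ℕ) :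
    exp (-(c / s)) ≤ n.factorial * (s / c) ^ n := by
  rw [exp_neg, inv_le_comm₀ (exp_pos _) (by positivity)]
  calc (↑n.factorial * (s / c) ^ n)⁻¹ = (c / s) ^ n / n.factorial := by
        rw [mul_inv, ← inv_pow, inv_div]; ring
    _ ≤ exp (c / s) := pow_div_factorial_le_exp _ (div_pos hc hs).le n

end Real

noncomputable def mehlerTrace (a k t : ℝ) : ℝ :=
  (Real.sqrt 2)⁻¹ * (Real.sqrt (Real.cosh t - 1))⁻¹ *
    Real.exp (-(a ^ 2 * (Real.cosh t + 1) / (4 * Real.sinh t))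
      - k ^ 2 * Real.sinh t / (4 * (Real.cosh t - 1)))

theorem mehlerTrace_eq_half_angle (a k : ℝ) {t : ℝ} (ht : 0 < t) :
    mehlerTrace a k t =
      Real.exp (-((a ^ 2 + k ^ 2) / 4 * (Real.cosh (t / 2) / Real.sinh (t / 2)))) /
        (2 * Real.sinh (t / 2)) := by
  obtain ⟨x, rfl⟩ : ∃ x, t = 2 * x := ⟨t / 2, by ring⟩
  have hx : 0 < Real.sinh x := Real.sinh_pos_iff.2 (by linarith)
  have hcx : 0 < Real.cosh x := Real.cosh_pos x
  rw [mehlerTrace, mul_div_cancel_left₀ x two_ne_zero, Real.sinh_two_mul, Real.cosh_two_mul,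
    Real.cosh_sq, show Real.sinh x ^ 2 + 1 + Real.sinh x ^ 2 - 1 = 2 * Real.sinh x ^ 2 by ring]
  have hsqrt : Real.sqrt 2 * Real.sqrt (2 * Real.sinh x ^ 2) = 2 * Real.sinh x := by
    rw [← Real.sqrt_mul zero_le_two,
      show 2 * (2 * Real.sinh x ^ 2) = (2 * Real.sinh x) ^ 2 by ring, Real.sqrt_sq (by positivity)]
  rw [← mul_inv, hsqrt, div_eq_mul_inv, mul_comm]
  congr 2
  have hx' := hx.ne'
  have hcx' := hcx.ne'
  field_simp
  rw [Real.cosh_sq]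
  ring

theorem heatTraceTz_eq_mehlerTrace (z : ℂ) {t : ℝ} (ht : 0 < t) :
    heatTraceTz t z = mehlerTrace z.re (-z.im) t := by
  set a := z.re with ha_def
  set k := -z.im with hk_def
  set s := Real.sinh t with hs_def
  set ch := Real.cosh t with hch_def
  have hs : 0 < s := Real.sinh_pos_iff.2 ht
  have hch : 0 < ch - 1 := sub_pos.2 (Real.one_lt_cosh.2 ht.ne')
  set β := (ch - 1) / s with hβ_def
  have hβ : 0 < β := div_pos hch hs
  have hgauss : heatTraceTz t z = ((Real.sqrt (2 * Real.pi * s))⁻¹ : ℝ) *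
      ∫ x : ℝ, cexp (-β * x ^ 2 + (a * β + I * k) * x +
        (-(ch / s) * a ^ 2 / 2 - I * (a * k / 2))) := by
    rw [heatTraceTz, ← MeasureTheory.integral_const_mul]
    congr 1 with x
    rw [mehlerKernel, ← hs_def, ← hch_def, mul_left_comm, ← Complex.exp_add]
    congr 2
    rw [ha_def, hk_def, hβ_def]
    push_cast
    field_simp
    ring
  have hsqrt :
      ((Real.pi : ℂ) / -(-β : ℂ)) ^ (1 / 2 : ℂ) = (Real.sqrt (Real.pi / β) : ℂ) := by
    rw [neg_neg, ← Complex.ofReal_div, Real.sqrt_eq_rpow, Complex.ofReal_cpow (by positivity)]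
    norm_num
  have hexponent : -(ch / s) * a ^ 2 / 2 - I * (a * k / 2) - (a * β + I * k) ^ 2 / (4 * -β)
      = ((-(a ^ 2 * (ch + 1) / (4 * s)) - k ^ 2 * s / (4 * (ch - 1)) : ℝ) : ℂ) := by
    have hsq : (a * β + I * k) ^ 2 =
        ((a ^ 2 * β ^ 2 - k ^ 2 : ℝ) : ℂ) + I * (2 * a * β * k : ℝ) := by
      push_cast
      linear_combination (k : ℂ) ^ 2 * I_sq
    have hs' : (s : ℂ) ≠ 0 := by exact_mod_cast hs.ne'
    have hch' : (ch : ℂ) - 1 ≠ 0 := by exact_mod_cast hch.ne'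
    rw [hsq, hβ_def]
    push_cast
    field_simp
    ring
  have hprefactor : (Real.sqrt (2 * Real.pi * s))⁻¹ * Real.sqrt (Real.pi / β)
      = (Real.sqrt 2)⁻¹ * (Real.sqrt (ch - 1))⁻¹ := by
    rw [← Real.sqrt_inv, ← Real.sqrt_mul (by positivity), ← Real.sqrt_inv, ← Real.sqrt_inv,
      ← Real.sqrt_mul (by positivity), hβ_def]
    congr 1
    field_simp
  rw [hgauss, integral_cexp_quadratic (by simpa using hβ), hsqrt, hexponent, ← mul_assoc,
    ← Complex.ofReal_mul, hprefactor, ← Complex.ofReal_exp, ← Complex.ofReal_mul, mehlerTrace]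

theorem heatTraceTz_eq_half_angle (z : ℂ) {t : ℝ} (ht : 0 < t) :
    heatTraceTz t z =
      (Real.exp (-(normSq z / 4 * (Real.cosh (t / 2) / Real.sinh (t / 2)))) /
        (2 * Real.sinh (t / 2)) : ℝ) := by
  rw [heatTraceTz_eq_mehlerTrace z ht, mehlerTrace_eq_half_angle _ _ ht, normSq_apply, neg_sq,
    ← sq, ← sq]

theorem heatTraceTz_isBigO_pow {z : ℂ} (hz : z ≠ 0) (N : ℕ) :
    (fun t => heatTraceTz t z) =O[𝓝[>] 0] fun t : ℝ => t ^ N := by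
  set q := normSq z / 4
  have hq : 0 < q := by have := normSq_pos.2 hz; positivity
  refine IsBigO.of_bound ((N + 1).factorial / q ^ (N + 1)) ?_
  filter_upwards [Ioc_mem_nhdsGT one_pos] with t ⟨ht, ht1⟩
  rw [heatTraceTz_eq_half_angle z ht, norm_real, norm_pow, Real.norm_of_nonneg ht.le,
    Real.norm_of_nonneg (by positivity)]
  set u := Real.sinh (t / 2)
  have hu : 0 < u := Real.sinh_pos_iff.2 (by linarith)
  have hut : u ≤ t := by
    have := Real.abs_sinh_sub_self_le (x := t / 2) (abs_le.2 ⟨by linarith, by linarith⟩)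
    nlinarith [abs_le.1 this]
  have hexp : -(q * (Real.cosh (t / 2) / u)) ≤ -(q / u) := by
    rw [neg_le_neg_iff, ← mul_div_assoc]
    exact div_le_div_of_nonneg_right (le_mul_of_one_le_right hq.le (Real.one_le_cosh _)) hu.le
  calc Real.exp (-(q * (Real.cosh (t / 2) / u))) / (2 * u)
      ≤ Real.exp (-(q / u)) / u := by gcongr; linarith
    _ ≤ (N + 1).factorial * (u / q) ^ (N + 1) / u := by
        gcongr; exact Real.exp_neg_div_le_factorial_mul_pow hq hu _
    _ = (N + 1).factorial / q ^ (N + 1) * u ^ N := by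
        have := hq.ne'
        have := hu.ne'
        rw [div_pow, pow_succ u]
        field_simp
    _ ≤ (N + 1).factorial / q ^ (N + 1) * t ^ N := by gcongr

theorem heatTraceTz_zero_sub_inv_isBigO_one :
    (fun t : ℝ => heatTraceTz t 0 - 1 / (t : ℂ)) =O[𝓝[>] 0] fun _ => (1 : ℝ) := by
  refine IsBigO.of_bound 1 ?_
  filter_upwards [Ioc_mem_nhdsGT two_pos] with t ⟨ht, ht2⟩
  have hhalf := Real.abs_inv_sinh_sub_inv_le_one (x := t / 2) (by linarith) (by linarith)
  rw [heatTraceTz_eq_half_angle 0 ht, map_zero, zero_div, zero_mul, neg_zero, Real.exp_zero,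
    ← Complex.ofReal_one, ← Complex.ofReal_div, ← Complex.ofReal_sub,
    norm_real, Real.norm_eq_abs, norm_one, mul_one]
  calc |1 / (2 * Real.sinh (t / 2)) - 1 / t| = |((Real.sinh (t / 2))⁻¹ - (t / 2)⁻¹) / 2| := by
        congr 1; field_simp
    _ ≤ 1 := by rw [abs_div, abs_two]; linarith

/-- For `t > 0` and `z = a - ik`,
`tr(T_z e^{-tH}) = (1/√2)(cosh t − 1)^{-1/2} exp(−a²(cosh t + 1)/(4 sinh t) − k² sinh t/(4(cosh t − 1)))`;
if `z ≠ 0` then `tr(T_z e^{-tH}) = O(t^∞)` as `t → 0⁺`, and if `z = 0` then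
`tr(e^{-tH}) = 1/t + O(1)` as `t → 0⁺`. -/
theorem heatTraceTz_eq (z : ℂ) :
    (∀ t : ℝ, 0 < t →
      heatTraceTz t z =
        ((((Real.sqrt 2)⁻¹ * (Real.sqrt (Real.cosh t - 1))⁻¹ *
          Real.exp (-(z.re ^ 2 * (Real.cosh t + 1) / (4 * Real.sinh t))
            - (-z.im) ^ 2 * Real.sinh t / (4 * (Real.cosh t - 1)))) : ℝ) : ℂ)) ∧
    (z ≠ 0 → ∀ N : ℕ,
      (fun t : ℝ => heatTraceTz t z) =O[nhdsWithin 0 (Set.Ioi 0)] fun t : ℝ => t ^ N) ∧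
    (z = 0 →
      (fun t : ℝ => heatTraceTz t z - 1 / (t : ℂ)) =O[nhdsWithin 0 (Set.Ioi 0)]
        fun _ : ℝ => (1 : ℝ)) :=
  ⟨fun _ ht => heatTraceTz_eq_mehlerTrace z ht, heatTraceTz_isBigO_pow,
    fun hz => hz ▸ heatTraceTz_zero_sub_inv_isBigO_one⟩
end

section
/- The semidirect product L ⋊ ℤ₄ of the square lattice L = kℤ + ikℤ by the rotation group ℤ₄ = {1, i, −1, −i} has exactly eight conjugacy classes with nonempty fixed point set of the associated affine map w ↦ gw + z, with representatives (0,1), (0,i), (k,i), (0,−1), (k,−1), (k(1+i),−1), (0,−i), (k,−i). -/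
open Complex

lemma Ipow4' (β : ℤ) : (I:ℂ)^β = 1 ∨ (I:ℂ)^β = I ∨ (I:ℂ)^β = -1 ∨ (I:ℂ)^β = -I := by
  have h : (I:ℂ)^β = I^(β % 4) := by
    conv_lhs => rw [show β = β % 4 + 4 * (β / 4) from by omega]
    rw [zpow_add₀ I_ne_zero, zpow_mul, show ((4:ℤ)) = ((4:ℕ):ℤ) from rfl, zpow_natCast,
      I_pow_four, one_zpow, mul_one]
  have h4 : β % 4 = 0 ∨ β % 4 = 1 ∨ β % 4 = 2 ∨ β % 4 = 3 := by omega
  rcases h4 with h4|h4|h4|h4 <;> rw [h, h4]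
  · left; rfl
  · right; left; exact zpow_one I
  · right; right; left
    rw [show ((2:ℤ)) = ((2:ℕ):ℤ) from rfl, zpow_natCast, I_sq]
  · right; right; right
    rw [show ((3:ℤ)) = ((3:ℕ):ℤ) from rfl, zpow_natCast, pow_succ, I_sq]; ring

lemma lat_eq' (k : ℝ) (hk : k ≠ 0) (m n m' n' : ℤ)
    (h : ((m:ℂ) + n*I) * k = ((m':ℂ) + n'*I) * k) : m = m' ∧ n = n' := by
  have hkc : (k:ℂ) ≠ 0 := Complex.ofReal_ne_zero.mpr hk
  have h' := mul_right_cancel₀ hkc h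
  have h1 := congrArg Complex.re h'
  have h2 := congrArg Complex.im h'
  simp at h1 h2
  exact ⟨by exact_mod_cast h1, by exact_mod_cast h2⟩

lemma solve' (k : ℝ) (hk : 0 < k) (a b zm zn cm cn gm gn z'm z'n : ℤ)
    (h : ((z'm:ℂ) + z'n*I)*k = ((a:ℂ)*k + b*(I*k)) + ((cm:ℂ)+cn*I)*(((zm:ℂ)+zn*I)*k)
        - ((gm:ℂ)+gn*I)*((a:ℂ)*k + b*(I*k))) :
    z'm = a + cm*zm - cn*zn - gm*a + gn*b ∧ z'n = b + cm*zn + cn*zm - gm*b - gn*a := by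
  apply lat_eq' k hk.ne'
  push_cast
  linear_combination h + ((cn:ℂ)*(zn:ℂ) - (gn:ℂ)*(b:ℂ))*(k:ℂ)*Complex.I_sq

/-- The semidirect product `L ⋊ ℤ₄` of the square lattice `L = kℤ + ikℤ` by
`ℤ₄ = {1, i, −1, −i}` (group law `(z₁,g₁)(z₂,g₂) = (z₁+g₁z₂, g₁g₂)`, conjugation
`(w,h)(z,g)(w,h)⁻¹ = (w + hz − gw, g)`) has exactly eight conjugacy classes of elements `(z,g)`
for which the affine map `w ↦ gw + z` has a fixed point (automatic for `g ≠ 1`; for `g = 1`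
equivalent to `z = 0`), with representatives
`(0,1), (0,i), (k,i), (0,−1), (k,−1), (k(1+i),−1), (0,−i), (k,−i)`. -/
theorem eight_conjugacy_classes_Z4_orbifold (k : ℝ) (hk : 0 < k) (L : Set ℂ)
    (hL : L = {w : ℂ | ∃ m₁ m₂ : ℤ, w = (m₁ : ℂ) * k + (m₂ : ℂ) * (I * k)})
    (IsConjTo : ℂ × ℂ → ℂ × ℂ → Prop)
    (hConj : ∀ p q : ℂ × ℂ, IsConjTo p q ↔
      ∃ w ∈ L, ∃ β : ℤ, q = (w + I ^ β * p.1 - p.2 * w, p.2))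
    (reps : List (ℂ × ℂ))
    (hreps : reps = [(0, 1), (0, I), ((k : ℂ), I), (0, -1), ((k : ℂ), -1),
      ((k : ℂ) * (1 + I), -1), (0, -I), ((k : ℂ), -I)]) :
    reps.Nodup ∧
    (∀ p : ℂ × ℂ, p.1 ∈ L → (∃ α : ℤ, p.2 = I ^ α) → (p.2 = 1 → p.1 = 0) →
      ∃ r ∈ reps, IsConjTo r p) ∧
    (∀ r ∈ reps, ∀ r' ∈ reps, r ≠ r' → ¬ IsConjTo r r') := by
  subst hreps hL
  refine ⟨?_, ?_, ?_⟩
  · -- Nodup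
    simp [List.nodup_cons, Prod.ext_iff, Complex.ext_iff]
    norm_num [hk.ne, hk.ne']
  · -- every admissible element is conjugate to a representative
    rintro ⟨z, g⟩ hzL ⟨α, hα⟩ h1
    obtain ⟨m, n, rfl⟩ := hzL
    replace hα : g = I ^ α := hα
    replace h1 : g = 1 → (↑m * ↑k + ↑n * (I * ↑k) : ℂ) = 0 := h1
    rcases Ipow4' α with hI|hI|hI|hI <;> rw [hI] at hα <;> subst hα
    · -- g = 1
      have h0 := h1 rfl
      refine ⟨(0, 1), by simp, ?_⟩
      rw [hConj]
      refine ⟨0, ⟨0, 0, by norm_num⟩, 0, Prod.ext ?_ rfl⟩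
      rw [h0]; norm_num
    · -- g = I
      rcases Int.even_or_odd (m + n) with ⟨t, ht⟩|⟨t, ht⟩
      · have htc : (m:ℂ) + n = t + t := by exact_mod_cast ht
        refine ⟨(0, I), by simp, ?_⟩
        rw [hConj]
        refine ⟨(↑(t-n):ℂ) * ↑k + (↑t:ℂ) * (I * ↑k), ⟨t-n, t, rfl⟩, 0, Prod.ext ?_ rfl⟩
        push_cast
        linear_combination (k:ℂ)*htc + (t:ℂ)*(k:ℂ)*Complex.I_sq
      · have htc : (m:ℂ) + n = 2*t + 1 := by exact_mod_cast ht
        refine ⟨((k:ℂ), I), by simp, ?_⟩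
        rw [hConj]
        refine ⟨(↑(t-n):ℂ) * ↑k + (↑t:ℂ) * (I * ↑k), ⟨t-n, t, rfl⟩, 0, Prod.ext ?_ rfl⟩
        simp only [zpow_zero, one_mul]
        push_cast
        linear_combination (k:ℂ)*htc + (t:ℂ)*(k:ℂ)*Complex.I_sq
    · -- g = -1
      rcases Int.even_or_odd m with ⟨s, hs⟩|⟨s, hs⟩ <;>
        rcases Int.even_or_odd n with ⟨t, ht⟩|⟨t, ht⟩
      · -- m even, n even
        have hsc : (m:ℂ) = s + s := by exact_mod_cast hs
        have htc : (n:ℂ) = t + t := by exact_mod_cast ht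
        refine ⟨(0, -1), by simp, ?_⟩
        rw [hConj]
        refine ⟨(↑s:ℂ) * ↑k + (↑t:ℂ) * (I * ↑k), ⟨s, t, rfl⟩, 0, Prod.ext ?_ rfl⟩
        push_cast
        linear_combination (k:ℂ)*hsc + (I*(k:ℂ))*htc
      · -- m even, n odd
        have hsc : (m:ℂ) = s + s := by exact_mod_cast hs
        have htc : (n:ℂ) = 2*t + 1 := by exact_mod_cast ht
        refine ⟨((k:ℂ), -1), by simp, ?_⟩
        rw [hConj]
        refine ⟨(↑s:ℂ) * ↑k + (↑t:ℂ) * (I * ↑k), ⟨s, t, rfl⟩, 1, Prod.ext ?_ rfl⟩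
        simp only [zpow_one]
        push_cast
        linear_combination (k:ℂ)*hsc + (I*(k:ℂ))*htc
      · -- m odd, n even
        have hsc : (m:ℂ) = 2*s + 1 := by exact_mod_cast hs
        have htc : (n:ℂ) = t + t := by exact_mod_cast ht
        refine ⟨((k:ℂ), -1), by simp, ?_⟩
        rw [hConj]
        refine ⟨(↑s:ℂ) * ↑k + (↑t:ℂ) * (I * ↑k), ⟨s, t, rfl⟩, 0, Prod.ext ?_ rfl⟩
        simp only [zpow_zero, one_mul]
        push_cast
        linear_combination (k:ℂ)*hsc + (I*(k:ℂ))*htc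
      · -- m odd, n odd
        have hsc : (m:ℂ) = 2*s + 1 := by exact_mod_cast hs
        have htc : (n:ℂ) = 2*t + 1 := by exact_mod_cast ht
        refine ⟨((k:ℂ) * (1 + I), -1), by simp, ?_⟩
        rw [hConj]
        refine ⟨(↑s:ℂ) * ↑k + (↑t:ℂ) * (I * ↑k), ⟨s, t, rfl⟩, 0, Prod.ext ?_ rfl⟩
        simp only [zpow_zero, one_mul]
        push_cast
        linear_combination (k:ℂ)*hsc + (I*(k:ℂ))*htc
    · -- g = -I
      rcases Int.even_or_odd (m + n) with ⟨t, ht⟩|⟨t, ht⟩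
      · have htc : (m:ℂ) + n = t + t := by exact_mod_cast ht
        refine ⟨(0, -I), by simp, ?_⟩
        rw [hConj]
        refine ⟨(↑t:ℂ) * ↑k + (↑(t-m):ℂ) * (I * ↑k), ⟨t, t-m, rfl⟩, 0, Prod.ext ?_ rfl⟩
        push_cast
        linear_combination (I*(k:ℂ))*htc + ((m:ℂ)-t)*(k:ℂ)*Complex.I_sq
      · have htc : (m:ℂ) + n = 2*t + 1 := by exact_mod_cast ht
        refine ⟨((k:ℂ), -I), by simp, ?_⟩
        rw [hConj]
        refine ⟨(↑t:ℂ) * ↑k + (↑(t-m+1):ℂ) * (I * ↑k), ⟨t, t-m+1, rfl⟩, 0, Prod.ext ?_ rfl⟩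
        simp only [zpow_zero, one_mul]
        push_cast
        linear_combination (I*(k:ℂ))*htc + ((m:ℂ)-t-1)*(k:ℂ)*Complex.I_sq
  · -- representatives are pairwise non-conjugate
    intro r hr r' hr' hne hcon
    rw [hConj] at hcon
    obtain ⟨w, hwL, β, heq⟩ := hcon
    obtain ⟨a, b, rfl⟩ := hwL
    simp only [List.mem_cons, List.mem_singleton, List.not_mem_nil, or_false] at hr hr'
    rcases hr with rfl|rfl|rfl|rfl|rfl|rfl|rfl|rfl <;>
      rcases hr' with rfl|rfl|rfl|rfl|rfl|rfl|rfl|rfl <;>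
      rw [Prod.ext_iff] at heq <;>
      obtain ⟨heq1, heq2⟩ := heq <;>
      dsimp only at heq1 heq2
    all_goals try exact hne rfl
    all_goals try { norm_num [Complex.ext_iff] at heq2 }
    -- remaining: same rotation part, different representative
    · -- (0,I) → (k,I)
      obtain ⟨h1, h2⟩ := solve' k hk a b 0 0 0 0 0 1 1 0 (by push_cast; linear_combination heq1)
      omega
    · -- (k,I) → (0,I)
      rcases Ipow4' β with hβ|hβ|hβ|hβ <;> rw [hβ] at heq1
      · obtain ⟨h1, h2⟩ := solve' k hk a b 1 0 1 0 0 1 0 0 (by push_cast; linear_combination heq1); omega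
      · obtain ⟨h1, h2⟩ := solve' k hk a b 1 0 0 1 0 1 0 0 (by push_cast; linear_combination heq1); omega
      · obtain ⟨h1, h2⟩ := solve' k hk a b 1 0 (-1) 0 0 1 0 0 (by push_cast; linear_combination heq1); omega
      · obtain ⟨h1, h2⟩ := solve' k hk a b 1 0 0 (-1) 0 1 0 0 (by push_cast; linear_combination heq1); omega
    · -- (0,-1) → (k,-1)
      obtain ⟨h1, h2⟩ := solve' k hk a b 0 0 0 0 (-1) 0 1 0 (by push_cast; linear_combination heq1)
      omega
    · -- (0,-1) → (k(1+I),-1)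
      obtain ⟨h1, h2⟩ := solve' k hk a b 0 0 0 0 (-1) 0 1 1 (by push_cast; linear_combination heq1)
      omega
    · -- (k,-1) → (0,-1)
      rcases Ipow4' β with hβ|hβ|hβ|hβ <;> rw [hβ] at heq1
      · obtain ⟨h1, h2⟩ := solve' k hk a b 1 0 1 0 (-1) 0 0 0 (by push_cast; linear_combination heq1); omega
      · obtain ⟨h1, h2⟩ := solve' k hk a b 1 0 0 1 (-1) 0 0 0 (by push_cast; linear_combination heq1); omega
      · obtain ⟨h1, h2⟩ := solve' k hk a b 1 0 (-1) 0 (-1) 0 0 0 (by push_cast; linear_combination heq1); omega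
      · obtain ⟨h1, h2⟩ := solve' k hk a b 1 0 0 (-1) (-1) 0 0 0 (by push_cast; linear_combination heq1); omega
    · -- (k,-1) → (k(1+I),-1)
      rcases Ipow4' β with hβ|hβ|hβ|hβ <;> rw [hβ] at heq1
      · obtain ⟨h1, h2⟩ := solve' k hk a b 1 0 1 0 (-1) 0 1 1 (by push_cast; linear_combination heq1); omega
      · obtain ⟨h1, h2⟩ := solve' k hk a b 1 0 0 1 (-1) 0 1 1 (by push_cast; linear_combination heq1); omega
      · obtain ⟨h1, h2⟩ := solve' k hk a b 1 0 (-1) 0 (-1) 0 1 1 (by push_cast; linear_combination heq1); omega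
      · obtain ⟨h1, h2⟩ := solve' k hk a b 1 0 0 (-1) (-1) 0 1 1 (by push_cast; linear_combination heq1); omega
    · -- (k(1+I),-1) → (0,-1)
      rcases Ipow4' β with hβ|hβ|hβ|hβ <;> rw [hβ] at heq1
      · obtain ⟨h1, h2⟩ := solve' k hk a b 1 1 1 0 (-1) 0 0 0 (by push_cast; linear_combination heq1); omega
      · obtain ⟨h1, h2⟩ := solve' k hk a b 1 1 0 1 (-1) 0 0 0 (by push_cast; linear_combination heq1); omega
      · obtain ⟨h1, h2⟩ := solve' k hk a b 1 1 (-1) 0 (-1) 0 0 0 (by push_cast; linear_combination heq1); omega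
      · obtain ⟨h1, h2⟩ := solve' k hk a b 1 1 0 (-1) (-1) 0 0 0 (by push_cast; linear_combination heq1); omega
    · -- (k(1+I),-1) → (k,-1)
      rcases Ipow4' β with hβ|hβ|hβ|hβ <;> rw [hβ] at heq1
      · obtain ⟨h1, h2⟩ := solve' k hk a b 1 1 1 0 (-1) 0 1 0 (by push_cast; linear_combination heq1); omega
      · obtain ⟨h1, h2⟩ := solve' k hk a b 1 1 0 1 (-1) 0 1 0 (by push_cast; linear_combination heq1); omega
      · obtain ⟨h1, h2⟩ := solve' k hk a b 1 1 (-1) 0 (-1) 0 1 0 (by push_cast; linear_combination heq1); omega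
      · obtain ⟨h1, h2⟩ := solve' k hk a b 1 1 0 (-1) (-1) 0 1 0 (by push_cast; linear_combination heq1); omega
    · -- (0,-I) → (k,-I)
      obtain ⟨h1, h2⟩ := solve' k hk a b 0 0 0 0 0 (-1) 1 0 (by push_cast; linear_combination heq1)
      omega
    · -- (k,-I) → (0,-I)
      rcases Ipow4' β with hβ|hβ|hβ|hβ <;> rw [hβ] at heq1
      · obtain ⟨h1, h2⟩ := solve' k hk a b 1 0 1 0 0 (-1) 0 0 (by push_cast; linear_combination heq1); omega
      · obtain ⟨h1, h2⟩ := solve' k hk a b 1 0 0 1 0 (-1) 0 0 (by push_cast; linear_combination heq1); omega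
      · obtain ⟨h1, h2⟩ := solve' k hk a b 1 0 (-1) 0 0 (-1) 0 0 (by push_cast; linear_combination heq1); omega
      · obtain ⟨h1, h2⟩ := solve' k hk a b 1 0 0 (-1) 0 (-1) 0 0 (by push_cast; linear_combination heq1); omega
end

section
/- Let φ ∈ (0,2π), let e^{iφ} be an eigenvalue ≠ 1 of g₁g₂ with unit eigenvector e, set f = g₁^{-1}e, c = (z₁ + g₁z₂, e), d = (z₁, e) (Hermitian inner products). Then |( z₂ + g₂ z₁, f)|² = |c|² + 2|d|²(1 − cos φ) + 2 Re(c \overline{d}(e^{-iφ} − 1)), and consequently, summing over an orthonormal eigenbasis of the non-fixed part, (Im(z₂, g₂z₁) − Im(z₁, g₁z₂))/2 + (1/4)Σⱼ(|(z₁+g₁z₂, eⱼ)|² − |(z₂+g₂z₁, fⱼ)|²)·cot(φⱼ/2) = 0, provided z₁ + g₁z₂ is orthogonal to the fixed subspace of g₁g₂. -/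
open Complex Matrix

/-- The Hermitian inner product `(u,v) = Σⱼ uⱼ \overline{vⱼ}` on `ℂⁿ`. -/
noncomputable def hermInner {n : ℕ} (u v : Fin n → ℂ) : ℂ :=
  ∑ j : Fin n, u j * (starRingEnd ℂ) (v j)

variable {n : ℕ}

lemma hI_add_left (u u' v : Fin n → ℂ) :
    hermInner (u + u') v = hermInner u v + hermInner u' v := by
  simp [hermInner, add_mul, Finset.sum_add_distrib]

lemma hI_sub_left (u u' v : Fin n → ℂ) :
    hermInner (u - u') v = hermInner u v - hermInner u' v := by
  simp [hermInner, sub_mul, Finset.sum_sub_distrib]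

lemma hI_smul_left (a : ℂ) (u v : Fin n → ℂ) :
    hermInner (a • u) v = a * hermInner u v := by
  simp [hermInner, Finset.mul_sum, mul_assoc]

lemma hI_smul_right (a : ℂ) (u v : Fin n → ℂ) :
    hermInner u (a • v) = (starRingEnd ℂ) a * hermInner u v := by
  simp [hermInner, Finset.mul_sum]; ring_nf
  exact Finset.sum_congr rfl fun j _ => by ring

lemma hI_sum_left {ι : Type*} (s : Finset ι) (f : ι → Fin n → ℂ) (v : Fin n → ℂ) :
    hermInner (∑ i ∈ s, f i) v = ∑ i ∈ s, hermInner (f i) v := by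
  simp [hermInner, Finset.sum_mul]
  exact Finset.sum_comm

lemma hI_sum_right {ι : Type*} (s : Finset ι) (u : Fin n → ℂ) (f : ι → Fin n → ℂ) :
    hermInner u (∑ i ∈ s, f i) = ∑ i ∈ s, hermInner u (f i) := by
  simp [hermInner, Finset.mul_sum]
  exact Finset.sum_comm

lemma hI_conj (u v : Fin n → ℂ) : hermInner u v = (starRingEnd ℂ) (hermInner v u) := by
  simp [hermInner]
  exact Finset.sum_congr rfl fun j _ => by ring

lemma hI_self_im (v : Fin n → ℂ) : (hermInner v v).im = 0 := by
  simp [hermInner, Complex.im_sum, Complex.mul_conj]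

lemma hI_mulVec_left (M : Matrix (Fin n) (Fin n) ℂ) (u v : Fin n → ℂ) :
    hermInner (M.mulVec u) v = hermInner u ((star M).mulVec v) := by
  simp only [hermInner, Matrix.mulVec, dotProduct, Matrix.star_apply, Complex.star_def, map_sum, _root_.map_mul,
    Finset.sum_mul, Finset.mul_sum, Complex.conj_conj]
  rw [Finset.sum_comm]
  exact Finset.sum_congr rfl fun j _ => Finset.sum_congr rfl fun k _ => by ring

lemma hI_mulVec_right (M : Matrix (Fin n) (Fin n) ℂ) (u v : Fin n → ℂ) :
    hermInner u (M.mulVec v) = hermInner ((star M).mulVec u) v := by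
  rw [hI_mulVec_left, star_star]

lemma hI_unitary {g : Matrix (Fin n) (Fin n) ℂ} (hg : g ∈ Matrix.unitaryGroup (Fin n) ℂ)
    (u v : Fin n → ℂ) : hermInner (g.mulVec u) (g.mulVec v) = hermInner u v := by
  rw [hI_mulVec_left, Matrix.mulVec_mulVec]
  have : star g * g = 1 := hg.1
  rw [this, Matrix.one_mulVec]

lemma star_eig {A : Matrix (Fin n) (Fin n) ℂ} (hA : A ∈ Matrix.unitaryGroup (Fin n) ℂ)
    {e : Fin n → ℂ} {φ : ℝ} (heig : A.mulVec e = Complex.exp (I * φ) • e) :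
    (star A).mulVec e = Complex.exp (-I * φ) • e := by
  have h1 : (star A).mulVec (A.mulVec e) = e := by
    rw [Matrix.mulVec_mulVec, hA.1, Matrix.one_mulVec]
  rw [heig, Matrix.mulVec_smul] at h1
  have hmul : Complex.exp (-I * φ) * Complex.exp (I * φ) = 1 := by
    rw [← Complex.exp_add]; ring_nf; exact Complex.exp_zero
  calc (star A).mulVec e = (Complex.exp (-I * φ) * Complex.exp (I * φ)) • (star A).mulVec e := by
        rw [hmul, one_smul]
    _ = Complex.exp (-I * φ) • (Complex.exp (I * φ) • (star A).mulVec e) := by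
        rw [mul_smul]
    _ = Complex.exp (-I * φ) • e := by rw [h1]

lemma exp_I_phi (φ : ℝ) : Complex.exp (I * φ) = (Real.cos φ : ℂ) + (Real.sin φ : ℂ) * I := by
  rw [mul_comm, Complex.exp_mul_I]
  simp [← Complex.ofReal_cos, ← Complex.ofReal_sin]

lemma exp_negI_phi (φ : ℝ) : Complex.exp (-I * φ) = (Real.cos φ : ℂ) - (Real.sin φ : ℂ) * I := by
  have : -I * (φ : ℂ) = ((-φ : ℝ) : ℂ) * I := by push_cast; ring
  rw [this, Complex.exp_mul_I]
  simp [← Complex.ofReal_cos, ← Complex.ofReal_sin]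
  ring

lemma conj_exp_negI (φ : ℝ) :
    (starRingEnd ℂ) (Complex.exp (-I * φ)) = Complex.exp (I * φ) := by
  rw [exp_negI_phi, exp_I_phi]
  simp only [map_sub, _root_.map_mul, Complex.conj_I, Complex.conj_ofReal]
  ring

lemma normSq_key (φ : ℝ) (c d : ℂ) :
    Complex.normSq (c + (Complex.exp (I * φ) - 1) * d)
      = Complex.normSq c + 2 * Complex.normSq d * (1 - Real.cos φ)
        + 2 * (c * (starRingEnd ℂ) d * (Complex.exp (-I * φ) - 1)).re := by
  rw [exp_I_phi, exp_negI_phi]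
  simp only [Complex.normSq_apply, Complex.add_re, Complex.add_im, Complex.sub_re,
    Complex.sub_im, Complex.mul_re, Complex.mul_im, Complex.one_re, Complex.one_im,
    Complex.ofReal_re, Complex.ofReal_im, Complex.I_re, Complex.I_im, Complex.conj_re,
    Complex.conj_im]
  linear_combination (d.re ^ 2 + d.im ^ 2) * Real.sin_sq_add_cos_sq φ

lemma partA (g₁ g₂ : Matrix (Fin n) (Fin n) ℂ)
    (hg₁ : g₁ ∈ Matrix.unitaryGroup (Fin n) ℂ) (hg₂ : g₂ ∈ Matrix.unitaryGroup (Fin n) ℂ)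
    (z₁ z₂ : Fin n → ℂ) (φ : ℝ) (e : Fin n → ℂ)
    (heig : (g₁ * g₂).mulVec e = Complex.exp (I * φ) • e) :
    Complex.normSq (hermInner (z₂ + g₂.mulVec z₁) ((star g₁).mulVec e))
      = Complex.normSq (hermInner (z₁ + g₁.mulVec z₂) e)
        + 2 * Complex.normSq (hermInner z₁ e) * (1 - Real.cos φ)
        + 2 * (hermInner (z₁ + g₁.mulVec z₂) e * (starRingEnd ℂ) (hermInner z₁ e) *
            (Complex.exp (-I * φ) - 1)).re := by
  have hA : g₁ * g₂ ∈ Matrix.unitaryGroup (Fin n) ℂ := mul_mem hg₁ hg₂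
  have hstar := star_eig hA heig
  have hkey : hermInner (z₂ + g₂.mulVec z₁) ((star g₁).mulVec e)
      = hermInner (z₁ + g₁.mulVec z₂) e
        + (Complex.exp (I * φ) - 1) * hermInner z₁ e := by
    rw [← hI_mulVec_left, Matrix.mulVec_add, hI_add_left, Matrix.mulVec_mulVec,
      hI_mulVec_left (g₁ * g₂) z₁ e, hstar, hI_smul_right, conj_exp_negI, hI_add_left]
    ring
  rw [hkey, normSq_key]

lemma termKey (φ : ℝ) (hφ : φ ∈ Set.Ioo 0 (2 * Real.pi)) (c d : ℂ) :
    (((starRingEnd ℂ) (Complex.exp (I * φ) * d) * c).im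
        - ((starRingEnd ℂ) (Complex.exp (I * φ) * d) * d).im
        - ((starRingEnd ℂ) c * d).im) / 2
      - (1 / 4) * (2 * Complex.normSq d * (1 - Real.cos φ)
          + 2 * (c * (starRingEnd ℂ) d * (Complex.exp (-I * φ) - 1)).re)
          * (Real.cos (φ / 2) / Real.sin (φ / 2)) = 0 := by
  have hs : Real.sin (φ / 2) ≠ 0 := by
    have h1 : 0 < φ / 2 := by linarith [hφ.1]
    have h2 : φ / 2 < Real.pi := by linarith [hφ.2]
    exact ne_of_gt (Real.sin_pos_of_pos_of_lt_pi h1 h2)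
  have hsin : Real.sin φ = 2 * Real.sin (φ / 2) * Real.cos (φ / 2) := by
    rw [← Real.sin_two_mul]; ring_nf
  have hcos : Real.cos φ = 2 * Real.cos (φ / 2) ^ 2 - 1 := by
    rw [← Real.cos_two_mul]; ring_nf
  rw [exp_I_phi, exp_negI_phi, hsin, hcos]
  simp only [Complex.normSq_apply, Complex.add_re, Complex.add_im, Complex.sub_re,
    Complex.sub_im, Complex.mul_re, Complex.mul_im, Complex.one_re, Complex.one_im,
    Complex.ofReal_re, Complex.ofReal_im, Complex.I_re, Complex.I_im, Complex.conj_re,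
    Complex.conj_im, Complex.mul_conj, _root_.map_mul, Complex.ofReal_mul]
  field_simp
  linear_combination (-(8:ℝ) * Real.cos (φ/2) * (d.re*c.re + d.im*c.im - d.re^2 - d.im^2)) *
    Real.sin_sq_add_cos_sq (φ / 2)

lemma hI_add_right (u v v' : Fin n → ℂ) :
    hermInner u (v + v') = hermInner u v + hermInner u v' := by
  simp [hermInner, mul_add, Finset.sum_add_distrib]

lemma hI_sub_right (u v v' : Fin n → ℂ) :
    hermInner u (v - v') = hermInner u v - hermInner u v' := by
  simp [hermInner, mul_sub, Finset.sum_sub_distrib]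

lemma exp_ne_one {φ : ℝ} (hφ : φ ∈ Set.Ioo 0 (2 * Real.pi)) :
    Complex.exp (I * φ) ≠ 1 := by
  intro h
  rw [Complex.exp_eq_one_iff] at h
  obtain ⟨k, hk⟩ := h
  have him := congrArg Complex.im hk
  simp [Complex.mul_im] at him
  -- him : φ = k * (2 * π) (some form)
  have hπ := Real.pi_pos
  rcases hφ with ⟨h0, h2⟩
  have hk1 : (k : ℝ) < 1 := by nlinarith
  have hk0 : (0 : ℝ) < k := by nlinarith
  have : (0 : ℤ) < k := by exact_mod_cast hk0
  have : (k : ℤ) < 1 := by exact_mod_cast hk1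
  omega

lemma partB (g₁ g₂ : Matrix (Fin n) (Fin n) ℂ)
    (hg₁ : g₁ ∈ Matrix.unitaryGroup (Fin n) ℂ) (hg₂ : g₂ ∈ Matrix.unitaryGroup (Fin n) ℂ)
    (z₁ z₂ : Fin n → ℂ) (m : ℕ) (e : Fin m → Fin n → ℂ) (φ : Fin m → ℝ)
    (hφ : ∀ j, φ j ∈ Set.Ioo 0 (2 * Real.pi))
    (heig : ∀ j, (g₁ * g₂).mulVec (e j) = Complex.exp (I * φ j) • e j)
    (hw : z₁ + g₁.mulVec z₂ = ∑ j : Fin m, hermInner (z₁ + g₁.mulVec z₂) (e j) • e j)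
    (hfix : (g₁ * g₂).mulVec (z₁ - ∑ j : Fin m, hermInner z₁ (e j) • e j)
      = z₁ - ∑ j : Fin m, hermInner z₁ (e j) • e j) :
    ((hermInner z₂ (g₂.mulVec z₁)).im - (hermInner z₁ (g₁.mulVec z₂)).im) / 2
      + (1 / 4) * ∑ j : Fin m,
          (Complex.normSq (hermInner (z₁ + g₁.mulVec z₂) (e j))
            - Complex.normSq (hermInner (z₂ + g₂.mulVec z₁) ((star g₁).mulVec (e j))))
          * (Real.cos (φ j / 2) / Real.sin (φ j / 2)) = 0 := by
  have hA : g₁ * g₂ ∈ Matrix.unitaryGroup (Fin n) ℂ := mul_mem hg₁ hg₂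
  have h1 : ∀ j, hermInner (e j) (z₁ - ∑ j : Fin m, hermInner z₁ (e j) • e j) = 0 := by
    intro j
    have h := hI_unitary hA (e j) (z₁ - ∑ j : Fin m, hermInner z₁ (e j) • e j)
    rw [heig j, hfix, hI_smul_left] at h
    have h2 : (Complex.exp (I * φ j) - 1)
        * hermInner (e j) (z₁ - ∑ j : Fin m, hermInner z₁ (e j) • e j) = 0 := by
      linear_combination h
    rcases mul_eq_zero.1 h2 with h3 | h3
    · exact absurd (sub_eq_zero.1 h3) (exp_ne_one (hφ j))
    · exact h3
  have h3 : hermInner (z₁ + g₁.mulVec z₂) (z₁ - ∑ j : Fin m, hermInner z₁ (e j) • e j) = 0 := by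
    conv_lhs => rw [hw]
    rw [hI_sum_left]
    simp only [hI_smul_left, h1, mul_zero]
    exact Finset.sum_const_zero
  have hz : z₁ = (z₁ - ∑ j : Fin m, hermInner z₁ (e j) • e j)
      + ∑ j : Fin m, hermInner z₁ (e j) • e j := by abel
  have h4 : hermInner z₁ (z₁ - ∑ j : Fin m, hermInner z₁ (e j) • e j)
      = hermInner (z₁ - ∑ j : Fin m, hermInner z₁ (e j) • e j)
          (z₁ - ∑ j : Fin m, hermInner z₁ (e j) • e j) := by
    have hd : hermInner z₁ (z₁ - ∑ j : Fin m, hermInner z₁ (e j) • e j)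
        - hermInner (z₁ - ∑ j : Fin m, hermInner z₁ (e j) • e j)
            (z₁ - ∑ j : Fin m, hermInner z₁ (e j) • e j) = 0 := by
      rw [← hI_sub_left,
        show z₁ - (z₁ - ∑ j : Fin m, hermInner z₁ (e j) • e j)
          = ∑ j : Fin m, hermInner z₁ (e j) • e j from by abel,
        hI_sum_left]
      simp only [hI_smul_left, h1, mul_zero]
      exact Finset.sum_const_zero
    exact sub_eq_zero.mp hd
  have h5 : (g₁ * g₂).mulVec z₁
      = (∑ j : Fin m, (Complex.exp (I * φ j) * hermInner z₁ (e j)) • e j)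
        + (z₁ - ∑ j : Fin m, hermInner z₁ (e j) • e j) := by
    conv_lhs => rw [hz]
    rw [Matrix.mulVec_add, hfix]
    have hsum : (g₁ * g₂).mulVec (∑ j : Fin m, hermInner z₁ (e j) • e j)
        = ∑ j : Fin m, (Complex.exp (I * φ j) * hermInner z₁ (e j)) • e j := by
      rw [← Matrix.mulVecLin_apply, map_sum]
      refine Finset.sum_congr rfl fun j _ => ?_
      rw [_root_.map_smul, Matrix.mulVecLin_apply, heig j, smul_smul, mul_comm]
    rw [hsum]
    abel
  have hg₁z₂ : g₁.mulVec z₂ = (z₁ + g₁.mulVec z₂) - z₁ := by abel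
  have h6 : hermInner z₂ (g₂.mulVec z₁)
      = (∑ j : Fin m, (starRingEnd ℂ) (Complex.exp (I * φ j) * hermInner z₁ (e j))
            * hermInner (z₁ + g₁.mulVec z₂) (e j))
        - ((∑ j : Fin m, (starRingEnd ℂ) (Complex.exp (I * φ j) * hermInner z₁ (e j))
            * hermInner z₁ (e j))
          + hermInner (z₁ - ∑ j : Fin m, hermInner z₁ (e j) • e j)
              (z₁ - ∑ j : Fin m, hermInner z₁ (e j) • e j)) := by
    rw [← hI_unitary hg₁ z₂ (g₂.mulVec z₁), Matrix.mulVec_mulVec, h5]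
    conv_lhs => rw [hg₁z₂]
    rw [hI_sub_left, hI_add_right, hI_add_right, hI_sum_right, hI_sum_right, h3, h4]
    simp only [hI_smul_right]
    rw [add_zero]
  have h7 : hermInner z₁ (g₁.mulVec z₂)
      = (∑ j : Fin m, (starRingEnd ℂ) (hermInner (z₁ + g₁.mulVec z₂) (e j))
            * hermInner z₁ (e j))
        - hermInner z₁ z₁ := by
    conv_lhs => rw [hg₁z₂]
    rw [hI_sub_right]
    congr 1
    conv_lhs => rw [hw]
    rw [hI_sum_right]
    simp only [hI_smul_right]
  have hpa : ∀ j, Complex.normSq (hermInner (z₂ + g₂.mulVec z₁) ((star g₁).mulVec (e j)))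
      = Complex.normSq (hermInner (z₁ + g₁.mulVec z₂) (e j))
        + 2 * Complex.normSq (hermInner z₁ (e j)) * (1 - Real.cos (φ j))
        + 2 * (hermInner (z₁ + g₁.mulVec z₂) (e j) * (starRingEnd ℂ) (hermInner z₁ (e j)) *
            (Complex.exp (-I * φ j) - 1)).re :=
    fun j => partA g₁ g₂ hg₁ hg₂ z₁ z₂ (φ j) (e j) (heig j)
  rw [h6, h7]
  simp only [Complex.sub_im, Complex.add_im, Complex.im_sum, hI_self_im, add_zero, sub_zero]
  rw [Finset.mul_sum, ← Finset.sum_sub_distrib, ← Finset.sum_sub_distrib, Finset.sum_div,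
    ← Finset.sum_add_distrib]
  refine Finset.sum_eq_zero fun j _ => ?_
  rw [hpa j]
  linear_combination termKey (φ j) (hφ j) (hermInner (z₁ + g₁.mulVec z₂) (e j))
    (hermInner z₁ (e j))

/-- Part (a): with `e` a unit eigenvector of `g₁g₂` for the eigenvalue `e^{iφ} ≠ 1`
(`φ ∈ (0,2π)`), `f = g₁⁻¹e = g₁*e`, `c = (z₁+g₁z₂, e)` and `d = (z₁, e)`, one has
`|(z₂+g₂z₁, f)|² = |c|² + 2|d|²(1 − cos φ) + 2 Re(c·\overline{d}(e^{-iφ} − 1))`.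
Part (b): summing over an orthonormal eigenbasis `eⱼ` (eigenvalues `e^{iφⱼ} ≠ 1`) of the
orthocomplement of the fixed subspace of `g₁g₂`, if `z₁ + g₁z₂` is orthogonal to the fixed
subspace (i.e. lies in the span of the `eⱼ`) and `z₁` decomposes as `Σ dⱼeⱼ` plus a fixed
vector, then
`(Im(z₂,g₂z₁) − Im(z₁,g₁z₂))/2 + (1/4)Σⱼ(|(z₁+g₁z₂,eⱼ)|² − |(z₂+g₂z₁,fⱼ)|²)·cot(φⱼ/2) = 0`. -/
theorem eigenvector_identity (n : ℕ) (g₁ g₂ : Matrix (Fin n) (Fin n) ℂ)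
    (hg₁ : g₁ ∈ Matrix.unitaryGroup (Fin n) ℂ) (hg₂ : g₂ ∈ Matrix.unitaryGroup (Fin n) ℂ)
    (z₁ z₂ : Fin n → ℂ) :
    (∀ (φ : ℝ), φ ∈ Set.Ioo 0 (2 * Real.pi) → ∀ e : Fin n → ℂ,
      hermInner e e = 1 →
      (g₁ * g₂).mulVec e = Complex.exp (I * φ) • e →
      Complex.normSq (hermInner (z₂ + g₂.mulVec z₁) ((star g₁).mulVec e))
        = Complex.normSq (hermInner (z₁ + g₁.mulVec z₂) e)
          + 2 * Complex.normSq (hermInner z₁ e) * (1 - Real.cos φ)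
          + 2 * (hermInner (z₁ + g₁.mulVec z₂) e * (starRingEnd ℂ) (hermInner z₁ e) *
              (Complex.exp (-I * φ) - 1)).re) ∧
    (∀ (m : ℕ) (e : Fin m → Fin n → ℂ) (φ : Fin m → ℝ),
      (∀ j l, hermInner (e j) (e l) = if j = l then 1 else 0) →
      (∀ j, φ j ∈ Set.Ioo 0 (2 * Real.pi)) →
      (∀ j, (g₁ * g₂).mulVec (e j) = Complex.exp (I * φ j) • e j) →
      -- `z₁ + g₁z₂` lies in the span of the eigenvectors `eⱼ`:
      (z₁ + g₁.mulVec z₂ = ∑ j : Fin m, hermInner (z₁ + g₁.mulVec z₂) (e j) • e j) →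
      -- `z₁` minus its components along the `eⱼ` is fixed by `g₁g₂`:
      ((g₁ * g₂).mulVec (z₁ - ∑ j : Fin m, hermInner z₁ (e j) • e j)
        = z₁ - ∑ j : Fin m, hermInner z₁ (e j) • e j) →
      ((hermInner z₂ (g₂.mulVec z₁)).im - (hermInner z₁ (g₁.mulVec z₂)).im) / 2
        + (1 / 4) * ∑ j : Fin m,
            (Complex.normSq (hermInner (z₁ + g₁.mulVec z₂) (e j))
              - Complex.normSq (hermInner (z₂ + g₂.mulVec z₁) ((star g₁).mulVec (e j))))
            * (Real.cos (φ j / 2) / Real.sin (φ j / 2)) = 0) := by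
  constructor
  · intro φ hφ e _he heig
    exact partA g₁ g₂ hg₁ hg₂ z₁ z₂ φ e heig
  · intro m e φ _horth hφ heig hw hfix
    exact partB g₁ g₂ hg₁ hg₂ z₁ z₂ m e φ hφ heig hw hfix
end
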